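/- The Choi map φ : M₃(ℂ) → M₃(ℂ), defined by φ((x_{ij})) = [[x₁₁ + x₃₃, −x₁₂, −x₁₃], [−x₂₁, x₁₁ + x₂₂, −x₂₃], [−x₃₁, −x₃₂, x₂₂ + x₃₃]], is not 2-copositive; that is, the composition t∘φ of φ with the transpose map t on M₃(ℂ) is not 2-positive. -/

import Mathlib

open scoped ComplexOrder Matrix

/-- The Choi map `φ` on `M₃(ℂ)`, sending `(x_{ij})` to the matrix with diagonal entries
`x₁₁+x₃₃, x₁₁+x₂₂, x₂₂+x₃₃` and off-diagonal entries `-x_{ij}`. -/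
def choiMap : Matrix (Fin 3) (Fin 3) ℂ →ₗ[ℂ] Matrix (Fin 3) (Fin 3) ℂ where
  toFun x :=
    !![x 0 0 + x 2 2, -x 0 1, -x 0 2;
       -x 1 0, x 0 0 + x 1 1, -x 1 2;
       -x 2 0, -x 2 1, x 1 1 + x 2 2]
  map_add' x y := by
    ext i j
    fin_cases i <;> fin_cases j <;>
      simp [Matrix.add_apply] <;> ring
  map_smul' c x := by
    ext i j
    fin_cases i <;> fin_cases j <;>
      simp [Matrix.smul_apply] <;> ring

/-- The map `φ ⊗ ι_k` on `Mₙ ⊗ M_k`, in block form. -/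
def mapTensorId {n m : ℕ} (k : ℕ)
    (φ : Matrix (Fin n) (Fin n) ℂ →ₗ[ℂ] Matrix (Fin m) (Fin m) ℂ)
    (A : Matrix (Fin n × Fin k) (Fin n × Fin k) ℂ) :
    Matrix (Fin m × Fin k) (Fin m × Fin k) ℂ :=
  fun p q => φ (Matrix.of fun i j => A (i, p.2) (j, q.2)) p.1 q.1

/-- `φ` is k-positive if `φ ⊗ ι_k` maps positive semidefinite matrices to
positive semidefinite matrices. -/
def IsKPositive {n m : ℕ} (k : ℕ)
    (φ : Matrix (Fin n) (Fin n) ℂ →ₗ[ℂ] Matrix (Fin m) (Fin m) ℂ) : Prop :=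
  ∀ A : Matrix (Fin n × Fin k) (Fin n × Fin k) ℂ, A.PosSemidef → (mapTensorId k φ A).PosSemidef

/-- The transpose map on `Mₘ(ℂ)` as a linear map. -/
def transposeMap (m : ℕ) : Matrix (Fin m) (Fin m) ℂ →ₗ[ℂ] Matrix (Fin m) (Fin m) ℂ where
  toFun x := x.transpose
  map_add' x y := Matrix.transpose_add x y
  map_smul' c x := Matrix.transpose_smul c x

/-! For `v = (e₁ + e₂ + e₃) ⊗ f₁ + (e₁ + e₂) ⊗ f₂` the rank-one matrix `v v*` is positive
semidefinite, but `(t ∘ φ ⊗ ι₂)(v v*)` has `⟨w, · w⟩ = -1` at `w = (e₁ + e₂ + e₃) ⊗ f₁ + e₃ ⊗ f₂`. -/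

lemma not_isKPositive_of_dotProduct_mulVec_neg {n m k : ℕ}
    {φ : Matrix (Fin n) (Fin n) ℂ →ₗ[ℂ] Matrix (Fin m) (Fin m) ℂ}
    {A : Matrix (Fin n × Fin k) (Fin n × Fin k) ℂ} (hA : A.PosSemidef)
    (w : Fin m × Fin k → ℂ) (hw : star w ⬝ᵥ (mapTensorId k φ A *ᵥ w) < 0) :
    ¬ IsKPositive k φ :=
  fun hφ => hw.not_ge ((hφ A hA).dotProduct_mulVec_nonneg w)

def choiWitness : Fin 3 × Fin 2 → ℂ := fun p => ![![1, 1], ![1, 1], ![1, 0]] p.1 p.2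

def choiTestVector : Fin 3 × Fin 2 → ℂ := fun p => ![![1, 0], ![1, 0], ![1, 1]] p.1 p.2

lemma dotProduct_mapTensorId_transpose_choiMap_witness :
    star choiTestVector ⬝ᵥ (mapTensorId 2 (transposeMap 3 ∘ₗ choiMap)
      (Matrix.vecMulVec choiWitness (star choiWitness)) *ᵥ choiTestVector) = -1 := by
  simp [mapTensorId, choiMap, transposeMap, choiWitness, choiTestVector, Matrix.vecMulVec,
    Matrix.mulVec, dotProduct, Fintype.sum_prod_type, Fin.sum_univ_succ]

/-- The Choi map is not 2-copositive: `t ∘ φ` is not 2-positive. -/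
theorem choiMap_not_two_copositive : ¬ IsKPositive 2 (transposeMap 3 ∘ₗ choiMap) := by
  refine not_isKPositive_of_dotProduct_mulVec_neg
    (Matrix.posSemidef_vecMulVec_self_star choiWitness) choiTestVector ?_
  rw [dotProduct_mapTensorId_transpose_choiMap_witness]
  norm_num
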